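/- Let λ_1,…,λ_m be real numbers whose r-th and (r+1)-th elementary symmetric polynomials both vanish: S_r = S_{r+1} = 0 for some 1 ≤ r ≤ m−1. Then at most r−1 of the λ_i are nonzero; equivalently S_k = 0 for all k ≥ r. -/

import Mathlib

open Polynomial

/-- Identity: for `f = ∏ (X - a)` with all `a ≠ 0`,
`f''(0) * f(0) - f'(0)^2 = - f(0)^2 * ∑ a⁻²`. -/
lemma hl_key_identity (s : Multiset ℝ) (hs : (0:ℝ) ∉ s) :
    Polynomial.eval 0 (Polynomial.derivative (Polynomial.derivative
        (s.map fun a => Polynomial.X - Polynomial.C a).prod)) *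
      Polynomial.eval 0 (s.map fun a => Polynomial.X - Polynomial.C a).prod -
      (Polynomial.eval 0 (Polynomial.derivative
        (s.map fun a => Polynomial.X - Polynomial.C a).prod)) ^ 2 =
    -(Polynomial.eval 0 (s.map fun a => Polynomial.X - Polynomial.C a).prod) ^ 2 *
      (s.map fun a => (a⁻¹) ^ 2).sum := by
  induction s using Multiset.induction_on with
  | empty => simp
  | cons a t ih =>
    have ha : a ≠ 0 := by rintro rfl; exact hs (Multiset.mem_cons_self 0 t)
    have ht : (0:ℝ) ∉ t := fun h => hs (Multiset.mem_cons_of_mem h)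
    have IH := ih ht
    simp only [Multiset.map_cons, Multiset.prod_cons, Multiset.sum_cons,
      derivative_mul, derivative_X_sub_C, one_mul, derivative_add,
      eval_add, eval_mul, eval_sub, eval_X, eval_C, zero_sub] at *
    have hinv : a * a⁻¹ = 1 := mul_inv_cancel₀ ha
    set F := (t.map fun a => Polynomial.X - Polynomial.C a).prod
    set v0 := Polynomial.eval 0 F
    set v1 := Polynomial.eval 0 (Polynomial.derivative F)
    set v2 := Polynomial.eval 0 (Polynomial.derivative (Polynomial.derivative F))
    linear_combination a ^ 2 * IH + v0 ^ 2 * (a * a⁻¹ + 1) * hinv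

/-- A real-rooted polynomial `f` with `f 0 ≠ 0` cannot have `f'(0) = f''(0) = 0`
unless it is constant. -/
lemma hl_crux (f : Polynomial ℝ) (hcard : Multiset.card f.roots = f.natDegree)
    (hd : 1 ≤ f.natDegree) (h0 : Polynomial.eval 0 f ≠ 0)
    (h1 : Polynomial.eval 0 (Polynomial.derivative f) = 0)
    (h2 : Polynomial.eval 0 (Polynomial.derivative (Polynomial.derivative f)) = 0) :
    False := by
  have hf0 : f ≠ 0 := fun h => h0 (by simp [h])
  have hroots0 : (0:ℝ) ∉ f.roots := fun h => h0 ((mem_roots hf0).mp h)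
  have hsplit : f = Polynomial.C f.leadingCoeff *
      (f.roots.map fun a => Polynomial.X - Polynomial.C a).prod :=
    (C_leadingCoeff_mul_prod_multiset_X_sub_C hcard).symm
  have hlc : f.leadingCoeff ≠ 0 := leadingCoeff_ne_zero.mpr hf0
  set g := (f.roots.map fun a => Polynomial.X - Polynomial.C a).prod with hg
  have hid := hl_key_identity f.roots hroots0
  rw [← hg] at hid
  have e0 : Polynomial.eval 0 f = f.leadingCoeff * Polynomial.eval 0 g := by
    conv_lhs => rw [hsplit]
    rw [eval_mul, eval_C]
  have ed : Polynomial.derivative f = Polynomial.C f.leadingCoeff * Polynomial.derivative g := by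
    conv_lhs => rw [hsplit]
    rw [derivative_C_mul]
  have e1 : Polynomial.eval 0 (Polynomial.derivative g) = 0 := by
    rw [ed] at h1; simp at h1; tauto
  have e2 : Polynomial.eval 0 (Polynomial.derivative (Polynomial.derivative g)) = 0 := by
    rw [ed, derivative_C_mul] at h2; simp at h2; tauto
  have hg0 : Polynomial.eval 0 g ≠ 0 := by
    intro h; rw [e0, h, mul_zero] at h0; exact h0 rfl
  rw [e1, e2] at hid
  have hz : (Polynomial.eval 0 g) ^ 2 * (f.roots.map fun a => (a⁻¹) ^ 2).sum = 0 := by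
    linear_combination hid
  have hsum : (f.roots.map fun a => (a⁻¹) ^ 2).sum = 0 := by
    rcases mul_eq_zero.mp hz with h | h
    · exact absurd (pow_eq_zero_iff (by norm_num) |>.mp h) hg0
    · exact h
  -- roots nonempty
  have hne : ∃ a, a ∈ f.roots := by
    refine Multiset.exists_mem_of_ne_zero ?_
    intro h; rw [h] at hcard; simp at hcard; omega
  obtain ⟨a, ha⟩ := hne
  have ha0 : a ≠ 0 := fun h => hroots0 (h ▸ ha)
  have hmem : ((a:ℝ)⁻¹) ^ 2 ∈ f.roots.map fun a => (a⁻¹) ^ 2 :=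
    Multiset.mem_map_of_mem _ ha
  have hpos : 0 < (a⁻¹) ^ 2 := by positivity
  have hrest := Multiset.cons_erase hmem
  have hnn : 0 ≤ ((f.roots.map fun a => (a⁻¹) ^ 2).erase ((a⁻¹)^2)).sum := by
    apply Multiset.sum_nonneg
    intro x hx
    have := Multiset.mem_of_mem_erase hx
    obtain ⟨b, _, rfl⟩ := Multiset.mem_map.mp this
    positivity
  rw [← hrest, Multiset.sum_cons] at hsum
  nlinarith

lemma hl_step (f : Polynomial ℝ) (hcard : Multiset.card f.roots = f.natDegree)
    (hd : 1 ≤ f.natDegree) (s : ℕ) (hs : 2 ≤ s)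
    (hdvd : (Polynomial.X : Polynomial ℝ) ^ s ∣ Polynomial.derivative f) :
    (Polynomial.X : Polynomial ℝ) ^ (s + 1) ∣ f := by
  have hf0 : f ≠ 0 := by
    intro h; rw [h, natDegree_zero] at hd; omega
  by_cases h0 : Polynomial.eval 0 f = 0
  · -- factor out the root at 0
    set t := rootMultiplicity 0 f with hts
    have ht1 : 1 ≤ t := (rootMultiplicity_pos hf0).mpr h0
    set g := f /ₘ (Polynomial.X - Polynomial.C 0) ^ t with hgdef
    have hfact : (Polynomial.X - Polynomial.C (0:ℝ)) ^ t * g = f :=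
      pow_mul_divByMonic_rootMultiplicity_eq f 0
    have hg0 : Polynomial.eval 0 g ≠ 0 :=
      eval_divByMonic_pow_rootMultiplicity_ne_zero 0 hf0
    rw [map_zero, sub_zero] at hfact
    by_cases hts' : s + 1 ≤ t
    · calc (Polynomial.X : Polynomial ℝ) ^ (s+1) ∣ Polynomial.X ^ t := pow_dvd_pow _ hts'
        _ ∣ f := by rw [← hfact]; exact Dvd.intro g rfl
    · exfalso
      push_neg at hts'  -- t ≤ s
      have hXt : (Polynomial.X : Polynomial ℝ) ^ t = Polynomial.X ^ (t-1) * Polynomial.X := by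
        rw [← pow_succ]; congr 1; omega
      have hderiv : Polynomial.derivative f =
          Polynomial.X ^ (t-1) * (Polynomial.C (t:ℝ) * g + Polynomial.X * Polynomial.derivative g) := by
        conv_lhs => rw [← hfact]
        rw [derivative_mul, derivative_X_pow, hXt]
        ring
      have h1 : (Polynomial.X : Polynomial ℝ) ^ (t-1) * Polynomial.X ^ (s-t+1) ∣
          Polynomial.X ^ (t-1) * (Polynomial.C (t:ℝ) * g + Polynomial.X * Polynomial.derivative g) := by
        rw [← pow_add]
        have : t - 1 + (s - t + 1) = s := by omega
        rw [this, ← hderiv]; exact hdvd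
      have h2 : (Polynomial.X : Polynomial ℝ) ^ (s-t+1) ∣
          (Polynomial.C (t:ℝ) * g + Polynomial.X * Polynomial.derivative g) :=
        (mul_dvd_mul_iff_left (pow_ne_zero _ X_ne_zero)).mp h1
      have h3 : (Polynomial.X : Polynomial ℝ) ∣
          (Polynomial.C (t:ℝ) * g + Polynomial.X * Polynomial.derivative g) :=
        dvd_trans (dvd_pow_self _ (by omega)) h2
      have h4 := (X_pow_dvd_iff.mp (pow_one (Polynomial.X : Polynomial ℝ) ▸ h3)) 0 (by norm_num)
      simp [mul_coeff_zero] at h4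
      have hgc : g.coeff 0 ≠ 0 := by rwa [coeff_zero_eq_eval_zero]
      rcases h4 with h | h
      · omega
      · exact hgc h
  · exfalso
    have hc0 := X_pow_dvd_iff.mp hdvd 0 (by omega)
    have hc1 := X_pow_dvd_iff.mp hdvd 1 (by omega)
    refine hl_crux f hcard hd h0 ?_ ?_
    · rwa [coeff_zero_eq_eval_zero] at hc0
    · rw [← coeff_zero_eq_eval_zero, coeff_derivative, hc1]
      ring

/-- **Hsiang–Lawson lemma.** Let `λ₁, …, λ_m` be real numbers whose `r`-th and `(r+1)`-th
elementary symmetric polynomials both vanish, for some `1 ≤ r ≤ m − 1`. Then at most `r − 1`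
of the `λ_i` are nonzero, and `S k = 0` for all `k ≥ r`. -/
theorem consecutive_esymm_vanish (m : ℕ) (lam : Fin m → ℝ)
    (S : ℕ → ℝ)
    (hS : ∀ k, S k = ∑ t ∈ Finset.univ.powersetCard k, ∏ i ∈ t, lam i)
    (r : ℕ) (hr1 : 1 ≤ r) (hr2 : r ≤ m - 1)
    (hSr : S r = 0) (hSr1 : S (r + 1) = 0) :
    (Finset.univ.filter fun i => lam i ≠ 0).card ≤ r - 1 ∧ ∀ k, r ≤ k → S k = 0 := by
  classical
  set T := Finset.univ.filter fun i => lam i ≠ 0 with hT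
  have hmemT : ∀ i, i ∈ T ↔ lam i ≠ 0 := by
    intro i; simp [hT]
  -- S k is the k-th esymm of the nonzero entries
  have hSe : ∀ k, S k = ∑ t ∈ T.powersetCard k, ∏ i ∈ t, lam i := by
    intro k
    rw [hS k]
    symm
    apply Finset.sum_subset (Finset.powersetCard_mono (Finset.subset_univ T))
    intro t ht hnt
    have htk : t.card = k := (Finset.mem_powersetCard.mp ht).2
    have : ¬ t ⊆ T := fun h => hnt (Finset.mem_powersetCard.mpr ⟨h, htk⟩)
    obtain ⟨i, hit, hiT⟩ := Finset.not_subset.mp this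
    exact Finset.prod_eq_zero hit (by simpa [hmemT i] using hiT)
  have hmain : T.card ≤ r - 1 := by
    by_contra hcon
    push_neg at hcon
    have hrn : r ≤ T.card := by omega
    set n := T.card with hn
    rcases eq_or_lt_of_le hrn with heq | hlt
    · -- n = r : S r = product of all nonzero entries ≠ 0
      have : S r = ∏ i ∈ T, lam i := by
        rw [hSe r, heq, hn, Finset.powersetCard_self, Finset.sum_singleton]
      have hne : (∏ i ∈ T, lam i) ≠ 0 :=
        Finset.prod_ne_zero_iff.mpr fun i hi => (hmemT i).mp hi
      exact hne (this ▸ hSr)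
    · -- r + 1 ≤ n
      have hr1n : r + 1 ≤ n := hlt
      set μ : Multiset ℝ := T.val.map lam with hμ
      have hμcard : Multiset.card μ = n := by simp [hμ, hn]
      have hμ0 : (0:ℝ) ∉ μ := by
        intro h
        obtain ⟨i, hi, h0⟩ := Multiset.mem_map.mp h
        exact (hmemT i).mp hi h0
      have hesymm : ∀ k, μ.esymm k = S k := by
        intro k; rw [hSe k, hμ]; exact Finset.esymm_map_val lam T k
      set p : Polynomial ℝ := (μ.map fun a => Polynomial.X - Polynomial.C a).prod with hp
      have hpdeg : p.natDegree = n := by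
        rw [hp, natDegree_multiset_prod_X_sub_C_eq_card, hμcard]
      have hproots : p.roots = μ := roots_multiset_prod_X_sub_C μ
      have hp0 : Polynomial.eval 0 p ≠ 0 := by
        rw [hp, eval_multiset_prod]
        apply Multiset.prod_ne_zero
        intro h
        rw [Multiset.map_map] at h
        obtain ⟨a, ha, h0⟩ := Multiset.mem_map.mp h
        simp only [Function.comp_apply, eval_sub, eval_X, eval_C, zero_sub, neg_eq_zero] at h0
        exact hμ0 (h0 ▸ ha)
      -- vanishing coefficients
      have hcoef1 : p.coeff (n - r) = 0 := by
        rw [hp, Multiset.prod_X_sub_C_coeff μ (by omega : n - r ≤ Multiset.card μ)]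
        have : Multiset.card μ - (n - r) = r := by omega
        rw [this, hesymm r, hSr, mul_zero]
      have hcoef2 : p.coeff (n - r - 1) = 0 := by
        rw [hp, Multiset.prod_X_sub_C_coeff μ (by omega : n - r - 1 ≤ Multiset.card μ)]
        have : Multiset.card μ - (n - r - 1) = r + 1 := by omega
        rw [this, hesymm (r+1), hSr1, mul_zero]
      -- root counts of iterated derivatives
      have hrc : ∀ j, n ≤ Multiset.card (Polynomial.derivative^[j] p).roots + j := by
        intro j
        induction j with
        | zero => simp [hproots, hμcard]
        | succ j ih =>
          have hcd := Polynomial.card_roots_le_derivative (Polynomial.derivative^[j] p)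
          rw [Function.iterate_succ_apply']
          omega
      have hfacts : ∀ j, j ≤ n - r - 1 →
          Multiset.card (Polynomial.derivative^[j] p).roots =
            (Polynomial.derivative^[j] p).natDegree ∧
          (Polynomial.derivative^[j] p).natDegree = n - j := by
        intro j hj
        have h1 : (Polynomial.derivative^[j] p).natDegree ≤ n - j :=
          hpdeg ▸ Polynomial.natDegree_iterate_derivative p j
        have h2 : Multiset.card (Polynomial.derivative^[j] p).roots ≤
            (Polynomial.derivative^[j] p).natDegree := Polynomial.card_roots' _
        have h3 := hrc j
        constructor <;> omega
      -- descent
      have hdvd : ∀ i, i ≤ n - r - 1 →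
          (Polynomial.X : Polynomial ℝ) ^ (2 + i) ∣ Polynomial.derivative^[n - r - 1 - i] p := by
        intro i
        induction i with
        | zero =>
          intro _
          rw [Nat.sub_zero, X_pow_dvd_iff]
          intro d hd
          interval_cases d
          · rw [Polynomial.coeff_iterate_derivative]
            simp only [Nat.zero_add]
            rw [hcoef2]
            simp
          · rw [Polynomial.coeff_iterate_derivative]
            have : 1 + (n - r - 1) = n - r := by omega
            rw [this, hcoef1]
            simp
        | succ i ih =>
          intro hile
          have hprev := ih (by omega)
          have hj1 : n - r - 1 - i = (n - r - 1 - (i+1)) + 1 := by omega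
          rw [hj1, Function.iterate_succ_apply'] at hprev
          obtain ⟨hcardj, hdegj⟩ := hfacts (n - r - 1 - (i+1)) (by omega)
          have := hl_step (Polynomial.derivative^[n - r - 1 - (i+1)] p) hcardj
            (by omega) (2 + i) (by omega) hprev
          have h23 : 2 + i + 1 = 2 + (i + 1) := by omega
          rwa [h23] at this
      have hfinal := hdvd (n - r - 1) (le_refl _)
      rw [Nat.sub_self, Function.iterate_zero_apply] at hfinal
      have hXp : (Polynomial.X : Polynomial ℝ) ∣ p :=
        dvd_trans (dvd_pow_self _ (by omega : 2 + (n - r - 1) ≠ 0)) hfinal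
      have : p.coeff 0 = 0 := by
        have := X_pow_dvd_iff.mp (pow_one (Polynomial.X : Polynomial ℝ) ▸ hXp) 0 (by norm_num)
        exact this
      rw [coeff_zero_eq_eval_zero] at this
      exact hp0 this
  refine ⟨hmain, fun k hk => ?_⟩
  rw [hSe k]
  have : T.card < k := by omega
  rw [Finset.powersetCard_eq_empty.mpr this, Finset.sum_empty]
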